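/- Let k be a field, Q a strongly locally finite quiver, and M an infinite dimensional representation in rep(Q). Then: (1) if M is finitely presented, then supp M contains a right infinite path; (2) if M is finitely co-presented, then supp M contains a left infinite path. -/

import Mathlib

open CategoryTheory CategoryTheory.Limits

/-- A quiver is strongly locally finite if it is locally finite (finitely many arrows
starting and ending at every vertex) and interval-finite (finitely many paths between
any two vertices). -/
def StronglyLocallyFinite (Q : Type) [Quiver.{0} Q] : Prop :=
  (∀ x : Q, Finite (Σ y : Q, x ⟶ y)) ∧
  (∀ y : Q, Finite (Σ x : Q, x ⟶ y)) ∧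
  (∀ x y : Q, Finite (Quiver.Path x y))

variable (k : Type) [Field k] (Q : Type) [Quiver.{0} Q]

/-- The category `Rep(Q)` of `k`-representations of `Q`, i.e. functors from the
path category of `Q` to `k`-vector spaces. -/
abbrev RepQ := Paths Q ⥤ ModuleCat.{0} k

instance : HasFiniteBiproducts (RepQ k Q) := Abelian.hasFiniteBiproducts

variable {Q}

/-- A vertex of `Q`, seen as an object of the path category. -/
abbrev vtx (x : Q) : Paths Q := x

/-- An arrow of `Q`, seen as a morphism of the path category. -/
abbrev arr {x y : Q} (e : x ⟶ y) : vtx x ⟶ vtx y := e.toPath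

/-- A path of `Q`, seen as a morphism of the path category. -/
abbrev pth {x y : Q} (p : Quiver.Path x y) : vtx x ⟶ vtx y := p

universe uC vC

/-- Natural transformations between functors lifted from prefunctors are determined
by vertexwise data commuting with the arrow maps. -/
def liftNatTrans {C : Type uC} [Category.{vC} C] {φ ψ : Q ⥤q C}
    (app : ∀ x : Q, φ.obj x ⟶ ψ.obj x)
    (h : ∀ {x y : Q} (e : x ⟶ y), φ.map e ≫ app y = app x ≫ ψ.map e) :
    Paths.lift φ ⟶ Paths.lift ψ where
  app x := app x
  naturality := fun (x y : Q) (p : Quiver.Path x y) => by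
    induction p with
    | nil =>
      show (Paths.lift φ).map (𝟙 (vtx x)) ≫ app x = app x ≫ (Paths.lift ψ).map (𝟙 (vtx x))
      erw [CategoryTheory.Functor.map_id, CategoryTheory.Functor.map_id, Category.id_comp]
      exact (Category.comp_id _).symm
    | cons p e ih =>
      show ((Paths.lift φ).map (pth p) ≫ φ.map e) ≫ app _ =
        app x ≫ ((Paths.lift ψ).map (pth p) ≫ ψ.map e)
      erw [Category.assoc, h e, ← Category.assoc, ih,
        Category.assoc]
      rfl

variable (Q) in
/-- The prefunctor underlying the indecomposable projective representation `P_a`. -/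
noncomputable def projPre (a : Q) : Q ⥤q ModuleCat.{0} k where
  obj x := ModuleCat.of k (Quiver.Path a x →₀ k)
  map {x y} e := ModuleCat.ofHom (Finsupp.lmapDomain k k (fun ρ => ρ.cons e))

variable (Q) in
/-- The indecomposable projective representation `P_a`: the value at `x` is the
`k`-vector space with basis the set of paths from `a` to `x`, and an arrow acts by
composition of paths. -/
noncomputable def projRep (a : Q) : RepQ k Q := Paths.lift (projPre k Q a)

variable (Q) in
/-- The prefunctor underlying the indecomposable injective representation `I_a`. -/
noncomputable def injPre (a : Q) : Q ⥤q ModuleCat.{0} k where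
  obj x := ModuleCat.of k (Quiver.Path x a → k)
  map {x y} e := ModuleCat.ofHom (LinearMap.funLeft k k (fun σ : Quiver.Path y a => (Quiver.Hom.toPath e).comp σ))

variable (Q) in
/-- The indecomposable injective representation `I_a`: the value at `x` is the
`k`-vector space with basis the set of paths from `x` to `a` (realised as the dual-style
function space `Quiver.Path x a → k`, which is the same as the span of the paths since `Q`
is interval-finite); the arrow `α : x ⟶ y` sends a path `ρα` to `ρ` and kills the paths
not factoring through `α`. -/
noncomputable def injRep (a : Q) : RepQ k Q := Paths.lift (injPre k Q a)

variable (Q) in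
/-- The representation with value `k` everywhere, all arrows acting as the identity. -/
noncomputable def unitRep : RepQ k Q :=
  Paths.lift { obj := fun _ => ModuleCat.of k k, map := fun _ => ModuleCat.ofHom LinearMap.id }

variable (Q) in
/-- The prefunctor underlying the simple representation `S_a`. -/
noncomputable def simplePre (a : Q) : Q ⥤q ModuleCat.{0} k where
  obj x := ModuleCat.of k (PLift (x = a) → k)
  map _ := 0

variable (Q) in
/-- The simple representation `S_a` concentrated at the vertex `a`. -/
noncomputable def simpleRep (a : Q) : RepQ k Q := Paths.lift (simplePre k Q a)

/-- The representation `M ⊗_k V` obtained by tensoring vertexwise with a `k`-space `V`. -/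
noncomputable def tensorRep (M : RepQ k Q) (V : ModuleCat.{0} k) : RepQ k Q :=
  M ⋙ MonoidalCategory.tensorRight V

open Classical in
/-- Auxiliary linear map used to define restrictions of representations. -/
noncomputable def piCondMap {A B : Type} [AddCommGroup A] [Module k A] [AddCommGroup B]
    [Module k B] (φ : A →ₗ[k] B) (P P' : Prop) : (PLift P → A) →ₗ[k] (PLift P' → B) where
  toFun f _ := if h : P then φ (f ⟨h⟩) else 0
  map_add' f g := by funext _; dsimp; split <;> simp
  map_smul' c f := by funext _; dsimp; split <;> simp

variable (Q) in
/-- The prefunctor underlying the restriction of `M` to the full subquiver generated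
by a set `S` of vertices. -/
noncomputable def restrictPre (M : RepQ k Q) (S : Set Q) : Q ⥤q ModuleCat.{0} k where
  obj x := ModuleCat.of k (PLift (x ∈ S) → M.obj (vtx x))
  map {x y} e := ModuleCat.ofHom (piCondMap k (M.map (arr e)).hom (x ∈ S) (y ∈ S))

variable (Q) in
/-- The restriction `M_S` of a representation `M` to the full subquiver generated by a
set `S` of vertices: the value at `x ∈ S` is `M(x)`, the value elsewhere is `0`, arrows
with both ends in `S` act as in `M` and the other arrows act as zero. -/
noncomputable def restrictRep (M : RepQ k Q) (S : Set Q) : RepQ k Q :=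
  Paths.lift (restrictPre k Q M S)

variable (Q) in
/-- The restriction `f_S` of a morphism of representations to the full subquiver
generated by a set `S` of vertices. -/
noncomputable def restrictHom {M N : RepQ k Q} (f : M ⟶ N) (S : Set Q) :
    restrictRep k Q M S ⟶ restrictRep k Q N S :=
  liftNatTrans (fun x => ModuleCat.ofHom (LinearMap.compLeft (f.app (vtx x)).hom (PLift (x ∈ S)))) (by
    intro x y e
    ext g
    funext hy
    show (LinearMap.compLeft (f.app (vtx y)).hom (PLift (y ∈ S)))
        (piCondMap k (M.map (arr e)).hom (x ∈ S) (y ∈ S) g) hy =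
      (piCondMap k (N.map (arr e)).hom (x ∈ S) (y ∈ S))
        (LinearMap.compLeft (f.app (vtx x)).hom (PLift (x ∈ S)) g) hy
    by_cases hx : x ∈ S
    · simp only [piCondMap, LinearMap.compLeft, LinearMap.coe_mk, AddHom.coe_mk, dif_pos hx]
      exact congrArg (fun φ => φ.hom (g ⟨hx⟩)) (f.naturality (arr e))
    · simp [piCondMap, LinearMap.compLeft, dif_neg hx]
      exact map_zero (f.app (vtx y)).hom)

variable (Q) in
/-- A subrepresentation of a representation, given by a family of subspaces stable
under the arrow maps. -/
structure SubRep (M : RepQ k Q) : Type where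
  carrier : ∀ x : Q, Submodule k (M.obj (vtx x))
  stable : ∀ {x y : Q} (e : x ⟶ y) (v : M.obj (vtx x)),
    v ∈ carrier x → M.map (arr e) v ∈ carrier y

variable (Q) in
/-- The socle of `M` at a vertex: the intersection of the kernels of the maps
associated to the arrows starting there. -/
def socle (M : RepQ k Q) (x : Q) : Submodule k (M.obj (vtx x)) :=
  ⨅ (y : Q) (e : x ⟶ y), LinearMap.ker (M.map (arr e)).hom

variable (Q) in
/-- The radical of `M` at a vertex: the sum of the images of the maps associated to the
arrows ending there. -/
def radical (M : RepQ k Q) (x : Q) : Submodule k (M.obj (vtx x)) :=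
  ⨆ (y : Q) (e : y ⟶ x), LinearMap.range (M.map (arr e)).hom

variable (Q) in
/-- The support of a representation: the set of vertices with nonzero value. -/
def suppR (M : RepQ k Q) : Set Q := {x : Q | Nontrivial (M.obj (vtx x))}

variable (Q) in
/-- A representation is locally finite dimensional if all its vertex spaces are
finite dimensional; these form the category `rep(Q)`. -/
def LocFinDim (M : RepQ k Q) : Prop := ∀ x : Q, FiniteDimensional k (M.obj (vtx x))

variable (Q) in
/-- A representation is finite dimensional if the total dimension `Σ_x dim M(x)` is finite,
i.e. it is locally finite dimensional with finite support. -/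
def FinDimRep (M : RepQ k Q) : Prop := (suppR k Q M).Finite ∧ LocFinDim k Q M

variable (Q) in
/-- The socle of `M` is an essential subrepresentation of `M`. -/
def SocleEssential (M : RepQ k Q) : Prop :=
  ∀ N : SubRep k Q M, (∃ x, N.carrier x ≠ ⊥) → ∃ x, N.carrier x ⊓ socle k Q M x ≠ ⊥

variable (Q) in
/-- The socle of `M` is finitely supported. -/
def SocleFinSupported (M : RepQ k Q) : Prop := {x : Q | socle k Q M x ≠ ⊥}.Finite

variable (Q) in
/-- The radical of `M` is a superfluous subrepresentation of `M`,
i.e. the top of `M` is essential over `M`. -/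
def TopEssential (M : RepQ k Q) : Prop :=
  ∀ N : SubRep k Q M, (∀ x, N.carrier x ⊔ radical k Q M x = ⊤) → ∀ x, N.carrier x = ⊤

variable (Q) in
/-- The top of `M` is finitely supported. -/
def TopFinSupported (M : RepQ k Q) : Prop := {x : Q | radical k Q M x ≠ ⊤}.Finite

variable (Q) in
/-- Membership in `Inj(Q)`: the full additive subcategory of `Rep(Q)` generated by the
representations `I_a ⊗ V` with `a` a vertex and `V` a `k`-space. -/
def MemInj (M : RepQ k Q) : Prop :=
  ∃ (n : ℕ) (a : Fin n → Q) (V : Fin n → ModuleCat.{0} k),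
    Nonempty (M ≅ ⨁ (fun i => tensorRep k (injRep k Q (a i)) (V i)))

variable (Q) in
/-- Membership in `Proj(Q)`: the full additive subcategory of `Rep(Q)` generated by the
representations `P_a ⊗ V` with `a` a vertex and `V` a `k`-space. -/
def MemProj (M : RepQ k Q) : Prop :=
  ∃ (n : ℕ) (a : Fin n → Q) (V : Fin n → ModuleCat.{0} k),
    Nonempty (M ≅ ⨁ (fun i => tensorRep k (projRep k Q (a i)) (V i)))

variable (Q) in
/-- Membership in `inj(Q)`: the locally finite dimensional representations in `Inj(Q)`. -/
def MemInjL (M : RepQ k Q) : Prop := MemInj k Q M ∧ LocFinDim k Q M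

variable (Q) in
/-- Membership in `proj(Q)`: the locally finite dimensional representations in `Proj(Q)`. -/
def MemProjL (M : RepQ k Q) : Prop := MemProj k Q M ∧ LocFinDim k Q M

variable (Q) in
/-- A representation is almost finitely presented if it admits a projective resolution
`0 → P₁ → P₀ → M → 0` with `P₀, P₁ ∈ Proj(Q)`. -/
def AlmostFinPresented (M : RepQ k Q) : Prop :=
  ∃ (P₁ P₀ : RepQ k Q) (f : P₁ ⟶ P₀) (g : P₀ ⟶ M) (w : f ≫ g = 0),
    MemProj k Q P₁ ∧ MemProj k Q P₀ ∧ (ShortComplex.mk f g w).ShortExact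

variable (Q) in
/-- A representation is almost finitely co-presented if it admits an injective
co-resolution `0 → M → I₀ → I₁ → 0` with `I₀, I₁ ∈ Inj(Q)`. -/
def AlmostFinCopresented (M : RepQ k Q) : Prop :=
  ∃ (I₀ I₁ : RepQ k Q) (f : M ⟶ I₀) (g : I₀ ⟶ I₁) (w : f ≫ g = 0),
    MemInj k Q I₀ ∧ MemInj k Q I₁ ∧ (ShortComplex.mk f g w).ShortExact

variable (Q) in
/-- A representation is finitely presented if it admits a projective resolution
`0 → P₁ → P₀ → M → 0` with `P₀, P₁ ∈ proj(Q)`; these form the category `rep^+(Q)`. -/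
def FinPresented (M : RepQ k Q) : Prop :=
  ∃ (P₁ P₀ : RepQ k Q) (f : P₁ ⟶ P₀) (g : P₀ ⟶ M) (w : f ≫ g = 0),
    MemProjL k Q P₁ ∧ MemProjL k Q P₀ ∧ (ShortComplex.mk f g w).ShortExact

variable (Q) in
/-- A representation is finitely co-presented if it admits an injective co-resolution
`0 → M → I₀ → I₁ → 0` with `I₀, I₁ ∈ inj(Q)`; these form the category `rep^-(Q)`. -/
def FinCopresented (M : RepQ k Q) : Prop :=
  ∃ (I₀ I₁ : RepQ k Q) (f : M ⟶ I₀) (g : I₀ ⟶ I₁) (w : f ≫ g = 0),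
    MemInjL k Q I₀ ∧ MemInjL k Q I₁ ∧ (ShortComplex.mk f g w).ShortExact

variable (Q) in
/-- A right infinite path with all vertices in `S`. -/
def HasRightInfPathIn (S : Set Q) : Prop :=
  ∃ (p : ℕ → Q) (_ : ∀ n, p n ⟶ p (n + 1)), ∀ n, p n ∈ S

variable (Q) in
/-- A left infinite path with all vertices in `S`. -/
def HasLeftInfPathIn (S : Set Q) : Prop :=
  ∃ (p : ℕ → Q) (_ : ∀ n, p (n + 1) ⟶ p n), ∀ n, p n ∈ S

/-- The list of vertices visited by a path. -/
def pathVerts {V : Type*} [Quiver V] {x : V} : ∀ {y : V}, Quiver.Path x y → List V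
  | _, Quiver.Path.nil => [x]
  | y, Quiver.Path.cons p _ => pathVerts p ++ [y]

variable (Q) in
/-- The full subquiver generated by `S` is socle-finite: every vertex of `S` is a
predecessor (within `S`) of one of finitely many fixed vertices. -/
def SetSocleFinite (S : Set Q) : Prop :=
  ∃ T : Finset Q, ∀ x ∈ S, ∃ t ∈ T, ∃ p : Quiver.Path x t, ∀ z ∈ pathVerts p, z ∈ S

variable (Q) in
/-- The full subquiver generated by `S` is top-finite: every vertex of `S` is a
successor (within `S`) of one of finitely many fixed vertices. -/
def SetTopFinite (S : Set Q) : Prop :=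
  ∃ T : Finset Q, ∀ x ∈ S, ∃ t ∈ T, ∃ p : Quiver.Path t x, ∀ z ∈ pathVerts p, z ∈ S

section AlmostSplit

universe uD vD
variable {C : Type uD} [Category.{vD} C]

/-- A morphism is a section if it admits a left inverse. -/
def IsSect {X Y : C} (f : X ⟶ Y) : Prop := ∃ r : Y ⟶ X, f ≫ r = 𝟙 X

/-- A morphism is a retraction if it admits a right inverse. -/
def IsRetr {X Y : C} (f : X ⟶ Y) : Prop := ∃ s : Y ⟶ X, s ≫ f = 𝟙 Y

/-- A morphism `g : Y ⟶ Z` is right almost split relative to the object class `P` if it is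
not a retraction and every non-retraction `h : W ⟶ Z` with `W` in `P` factors through `g`. -/
def RightAS (P : C → Prop) {Y Z : C} (g : Y ⟶ Z) : Prop :=
  ¬ IsRetr g ∧ ∀ ⦃W : C⦄, P W → ∀ h : W ⟶ Z, ¬ IsRetr h → ∃ u : W ⟶ Y, u ≫ g = h

/-- A morphism `f : X ⟶ Y` is left almost split relative to the object class `P` if it is
not a section and every non-section `h : X ⟶ W` with `W` in `P` factors through `f`. -/
def LeftAS (P : C → Prop) {X Y : C} (f : X ⟶ Y) : Prop :=
  ¬ IsSect f ∧ ∀ ⦃W : C⦄, P W → ∀ h : X ⟶ W, ¬ IsSect h → ∃ u : Y ⟶ W, f ≫ u = h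

/-- A morphism `g : Y ⟶ Z` is right minimal. -/
def RightMin {Y Z : C} (g : Y ⟶ Z) : Prop := ∀ u : Y ⟶ Y, u ≫ g = g → IsIso u

/-- A morphism `f : X ⟶ Y` is left minimal. -/
def LeftMin {X Y : C} (f : X ⟶ Y) : Prop := ∀ u : Y ⟶ Y, f ≫ u = f → IsIso u

/-- Minimal right almost split relative to the object class `P`. -/
def MinRightAS (P : C → Prop) {Y Z : C} (g : Y ⟶ Z) : Prop := RightAS P g ∧ RightMin g

/-- Minimal left almost split relative to the object class `P`. -/
def MinLeftAS (P : C → Prop) {X Y : C} (f : X ⟶ Y) : Prop := LeftAS P f ∧ LeftMin f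

/-- An object is indecomposable if it is nonzero and its only idempotent endomorphisms
are `0` and the identity (equivalently, it is not a direct sum of two nonzero objects). -/
def Indec [Limits.HasZeroMorphisms C] (X : C) : Prop :=
  ¬ Limits.IsZero X ∧ ∀ e : X ⟶ X, e ≫ e = e → e = 0 ∨ e = 𝟙 X

/-- A morphism is irreducible relative to the object class `P` if it is neither a section
nor a retraction while in any factorization through an object of `P` the first factor is a
section or the second factor is a retraction. -/
def IrredOn (P : C → Prop) {X Y : C} (f : X ⟶ Y) : Prop :=
  ¬ IsSect f ∧ ¬ IsRetr f ∧
    ∀ ⦃Z : C⦄, P Z → ∀ (g : X ⟶ Z) (h : Z ⟶ Y), g ≫ h = f → IsSect g ∨ IsRetr h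

/-- An object `M` is projective relative to the object class `P`: any morphism from `M` to
the codomain of an epimorphism between objects of `P` lifts. -/
def ProjOn (P : C → Prop) (M : C) : Prop :=
  ∀ ⦃A B : C⦄, P A → P B → ∀ (g : A ⟶ B), Epi g → ∀ h : M ⟶ B, ∃ l : M ⟶ A, l ≫ g = h

/-- An object `M` is injective relative to the object class `P`: any morphism to `M` from
the domain of a monomorphism between objects of `P` extends. -/
def InjOn (P : C → Prop) (M : C) : Prop :=
  ∀ ⦃A B : C⦄, P A → P B → ∀ (g : A ⟶ B), Mono g → ∀ h : A ⟶ M, ∃ l : B ⟶ M, g ≫ l = h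

/-- An essential monomorphism, relative to the object class `P`. -/
def EssMonoOn (P : C → Prop) {X Y : C} (f : X ⟶ Y) : Prop :=
  Mono f ∧ ∀ ⦃W : C⦄, P W → ∀ g : Y ⟶ W, Mono (f ≫ g) → Mono g

/-- A superfluous epimorphism, relative to the object class `P`. -/
def SupEpiOn (P : C → Prop) {X Y : C} (f : X ⟶ Y) : Prop :=
  Epi f ∧ ∀ ⦃W : C⦄, P W → ∀ g : W ⟶ X, Epi (g ≫ f) → Epi g

end AlmostSplit

/-- An almost split (Auslander-Reiten) sequence, relative to the object class `P` in an
ambient abelian category: a short exact sequence with terms in `P` whose left map is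
minimal left almost split and whose right map is minimal right almost split relative
to `P`. -/
def IsASSeqOn {C : Type uC} [Category.{vC} C] [Abelian C] (P : C → Prop)
    (S : ShortComplex C) : Prop :=
  S.ShortExact ∧ P S.X₁ ∧ P S.X₂ ∧ P S.X₃ ∧ MinLeftAS P S.f ∧ MinRightAS P S.g

variable (Q) in
/-- The morphism `P_y ⟶ P_x` determined by a path `p` from `x` to `y`
(composition with `p`). -/
noncomputable def projPathTrans {x y : Q} (p : Quiver.Path x y) :
    projRep k Q y ⟶ projRep k Q x :=
  liftNatTrans (fun z => ModuleCat.ofHom (Finsupp.lmapDomain k k (fun ρ : Quiver.Path y z => p.comp ρ))) (by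
    intro z w e
    apply ModuleCat.hom_ext
    show (Finsupp.lmapDomain k k _).comp (Finsupp.lmapDomain k k _) =
      (Finsupp.lmapDomain k k _).comp (Finsupp.lmapDomain k k _)
    rw [← Finsupp.lmapDomain_comp, ← Finsupp.lmapDomain_comp]
    rfl)

variable (Q) in
/-- The morphism `I_y ⟶ I_x` determined by a path `p` from `x` to `y`. -/
noncomputable def injPathTrans {x y : Q} (p : Quiver.Path x y) :
    injRep k Q y ⟶ injRep k Q x :=
  liftNatTrans (fun z => ModuleCat.ofHom (LinearMap.funLeft k k (fun σ : Quiver.Path z x => σ.comp p))) (by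
    intro z w e
    ext h
    funext σ
    show h ((Quiver.Hom.toPath e).comp (σ.comp p)) = h (((Quiver.Hom.toPath e).comp σ).comp p)
    rw [Quiver.Path.comp_assoc] <;> try rfl)

variable (Q) in
/-- The linear combination of path morphisms `P_y ⟶ P_x` determined by an element of the
span of the paths from `x` to `y`. -/
noncomputable def projCombTrans {x y : Q} (c : Quiver.Path x y →₀ k) :
    projRep k Q y ⟶ projRep k Q x :=
  c.sum (fun p cp => cp • projPathTrans k Q p)

variable (Q) in
/-- The linear combination of path morphisms `I_y ⟶ I_x` determined by an element of the
span of the paths from `x` to `y`. -/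
noncomputable def injCombTrans {x y : Q} (c : Quiver.Path x y →₀ k) :
    injRep k Q y ⟶ injRep k Q x :=
  c.sum (fun p cp => cp • injPathTrans k Q p)

variable (Q) in
/-- Evaluation of a morphism `P_y ⟶ P_x` on the trivial path, yielding an element of the
span of the paths from `x` to `y`. -/
noncomputable def evalProjHom {x y : Q} (u : projRep k Q y ⟶ projRep k Q x) :
    Quiver.Path x y →₀ k :=
  u.app (vtx y) (Finsupp.single Quiver.Path.nil 1)

open Classical in
variable (Q) in
/-- Evaluation of a morphism `I_y ⟶ I_x`, yielding an element of the span of the paths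
from `x` to `y` (here `Q` is interval-finite). -/
noncomputable def evalInjHom (hfin : ∀ x y : Q, Finite (Quiver.Path x y)) {x y : Q}
    (u : injRep k Q y ⟶ injRep k Q x) : Quiver.Path x y →₀ k :=
  haveI := hfin x y
  Finsupp.equivFunOnFinite.symm (fun p => u.app (vtx x) (Pi.single p 1) Quiver.Path.nil)

variable (Q) in
/-- The Nakayama functor `ν` applied to a morphism between objects of `proj(Q)` written as
finite direct sums of representations `P_a`; the value is the corresponding morphism between
the direct sums of the representations `I_a`. -/
noncomputable def nuMap {r s : ℕ} (xv : Fin r → Q) (yv : Fin s → Q)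
    (f : (⨁ fun j => projRep k Q (yv j)) ⟶ (⨁ fun i => projRep k Q (xv i))) :
    (⨁ fun j => injRep k Q (yv j)) ⟶ (⨁ fun i => injRep k Q (xv i)) :=
  biproduct.matrix fun j i =>
    injCombTrans k Q (evalProjHom k Q
      (biproduct.ι (fun j => projRep k Q (yv j)) j ≫ f ≫ biproduct.π (fun i => projRep k Q (xv i)) i))

variable (Q) in
/-- The inverse Nakayama functor `ν⁻` applied to a morphism between objects of `inj(Q)`
written as finite direct sums of representations `I_a`. -/
noncomputable def nuInvMap (hfin : ∀ x y : Q, Finite (Quiver.Path x y)) {r s : ℕ}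
    (xv : Fin r → Q) (yv : Fin s → Q)
    (g : (⨁ fun i => injRep k Q (xv i)) ⟶ (⨁ fun j => injRep k Q (yv j))) :
    (⨁ fun i => projRep k Q (xv i)) ⟶ (⨁ fun j => projRep k Q (yv j)) :=
  biproduct.matrix fun i j =>
    projCombTrans k Q (evalInjHom k Q hfin
      (biproduct.ι (fun i => injRep k Q (xv i)) i ≫ g ≫ biproduct.π (fun j => injRep k Q (yv j)) j))

variable (Q) in
/-- `0 → ⊕_j P_{y_j} → ⊕_i P_{x_i} → M → 0` is a minimal projective resolution:
a short exact sequence in which the two epimorphisms onto `M` and onto the kernel of `ε`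
are projective covers (superfluous epimorphisms). -/
structure IsMinProjRes (M : RepQ k Q) {r s : ℕ} (xv : Fin r → Q) (yv : Fin s → Q)
    (f : (⨁ fun j => projRep k Q (yv j)) ⟶ (⨁ fun i => projRep k Q (xv i)))
    (ε : (⨁ fun i => projRep k Q (xv i)) ⟶ M) : Prop where
  w : f ≫ ε = 0
  shortExact : (ShortComplex.mk f ε w).ShortExact
  superfluous_ε : SupEpiOn (fun _ => True) ε
  superfluous_f : SupEpiOn (fun _ => True) (kernel.lift ε f w)

variable (Q) in
/-- `0 → M → ⊕_i I_{x_i} → ⊕_j I_{y_j} → 0` is a minimal injective co-resolution: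
a short exact sequence in which the two monomorphisms from `M` and from the cokernel of `ι`
are injective hulls (essential monomorphisms). -/
structure IsMinInjCores (M : RepQ k Q) {r s : ℕ} (xv : Fin r → Q) (yv : Fin s → Q)
    (ι : M ⟶ (⨁ fun i => injRep k Q (xv i)))
    (g : (⨁ fun i => injRep k Q (xv i)) ⟶ (⨁ fun j => injRep k Q (yv j))) : Prop where
  w : ι ≫ g = 0
  shortExact : (ShortComplex.mk ι g w).ShortExact
  essential_ι : EssMonoOn (fun _ => True) ι
  essential_g : EssMonoOn (fun _ => True) (cokernel.desc ι g w)

variable (Q) in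
/-- `N` is an Auslander-Reiten translate `DTr M` of `M`: for some minimal projective
resolution `0 → P₁ → P₀ → M → 0` by finite direct sums of representations `P_a`,
the representation `N` is isomorphic to the kernel of `ν(f) : ν(P₁) ⟶ ν(P₀)`. -/
def IsDTrOf (N M : RepQ k Q) : Prop :=
  ∃ (r s : ℕ) (xv : Fin r → Q) (yv : Fin s → Q)
    (f : (⨁ fun j => projRep k Q (yv j)) ⟶ (⨁ fun i => projRep k Q (xv i)))
    (ε : (⨁ fun i => projRep k Q (xv i)) ⟶ M),
      IsMinProjRes k Q M xv yv f ε ∧ Nonempty (N ≅ kernel (nuMap k Q xv yv f))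

variable (Q) in
/-- `N` is an inverse Auslander-Reiten translate `TrD M` of `M`: for some minimal
injective co-resolution `0 → M → I₀ → I₁ → 0` by finite direct sums of representations
`I_a`, the representation `N` is isomorphic to the cokernel of `ν⁻(g) : ν⁻(I₀) ⟶ ν⁻(I₁)`. -/
def IsTrDOf (hfin : ∀ x y : Q, Finite (Quiver.Path x y)) (N M : RepQ k Q) : Prop :=
  ∃ (r s : ℕ) (xv : Fin r → Q) (yv : Fin s → Q)
    (ι : M ⟶ (⨁ fun i => injRep k Q (xv i)))
    (g : (⨁ fun i => injRep k Q (xv i)) ⟶ (⨁ fun j => injRep k Q (yv j))),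
      IsMinInjCores k Q M xv yv ι g ∧ Nonempty (N ≅ cokernel (nuInvMap k Q hfin xv yv g))

variable (Q) in
/-- `N ≅ DTr^n M`, where in particular all the intermediate translates are defined. -/
def IsDTrPow : ℕ → RepQ k Q → RepQ k Q → Prop
  | 0, N, M => Nonempty (N ≅ M)
  | n + 1, N, M => ∃ L : RepQ k Q, IsDTrPow n L M ∧ IsDTrOf k Q N L

variable (Q) in
/-- The quiver `Q` is connected: any two vertices are joined by a walk. -/
def QConnected : Prop :=
  ∀ x y : Q, Nonempty (Quiver.Path (a := (x : Quiver.Symmetrify Q)) (y : Quiver.Symmetrify Q))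

/-!
If `M` is a quotient of `⊕ᵢ P_{aᵢ} ⊗ Vᵢ`, every vertex `x` of `supp M` carries a nonzero vector
`M(q) m` with `m ∈ M(aᵢ)` and `q` a path from `aᵢ` to `x`; the vector survives along every
initial segment of `q`, so `q` runs inside `supp M`. Thus the infinite set `supp M` is reached,
inside itself, from the finitely many vertices `aᵢ`, and as `Q` is locally finite, Kőnig's lemma
gives a right infinite path in `supp M`. Dually, for `M ⊆ ⊕ᵢ I_{aᵢ} ⊗ Vᵢ` a nonzero `m ∈ M(x)` has
a nonzero coordinate at some path `p` from `x` to `aᵢ`, which again forces `p` into `supp M`,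
and Kőnig's lemma for the reversed arrows gives a left infinite path.
-/

open Relation TensorProduct

section Konig

variable {α : Type*} {R : α → α → Prop}

theorem Acc.setOf_reflTransGen_finite (hR : ∀ a, {b | R a b}.Finite) {a : α}
    (ha : Acc (flip R) a) : {x | ReflTransGen R a x}.Finite := by
  induction ha with
  | intro a _ ih =>
    refine (((hR a).biUnion fun b hb => ih b hb).insert a).subset fun x hx => ?_
    rcases hx.cases_head with rfl | ⟨b, hab, hbx⟩
    · exact Set.mem_insert _ _
    · exact Set.mem_insert_of_mem _ (Set.mem_biUnion hab hbx)

/-- Kőnig's lemma for a finitely branching relation. -/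
theorem exists_seq_rel_of_infinite_reachable (hR : ∀ a, {b | R a b}.Finite) {T : Set α}
    (hT : T.Finite) (hinf : {x | ∃ t ∈ T, ReflTransGen R t x}.Infinite) :
    ∃ f : ℕ → α, ∀ n, R (f n) (f (n + 1)) := by
  have hsub : {x | ∃ t ∈ T, ReflTransGen R t x} = ⋃ t ∈ T, {x | ReflTransGen R t x} := by
    ext; simp
  obtain ⟨t, -, ht⟩ : ∃ t ∈ T, ¬ Acc (flip R) t := by
    by_contra! h
    exact hinf (hsub ▸ hT.biUnion fun t ht => (h t ht).setOf_reflTransGen_finite hR)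
  obtain ⟨f, -, hf⟩ := not_acc_iff_exists_descending_chain.mp ht
  exact ⟨f, hf⟩

end Konig

namespace Quiver

variable {V : Type*} [Quiver V]

theorem pathVerts_eq_vertices {x : V} : ∀ {y : V} (p : Path x y), pathVerts p = p.vertices
  | _, .nil => rfl
  | _, .cons p _ => by
    rw [Path.vertices_cons, List.concat_eq_append, ← pathVerts_eq_vertices p]
    rfl

def ArrowIn (S : Set V) (a b : V) : Prop := a ∈ S ∧ b ∈ S ∧ Nonempty (a ⟶ b)

theorem reflTransGen_arrowIn_of_path {S : Set V} {x : V} :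
    ∀ {y : V} (p : Path x y), (∀ z ∈ pathVerts p, z ∈ S) → ReflTransGen (ArrowIn S) x y
  | _, .nil, _ => .refl
  | y, .cons (b := w) p e, hp => by
    have hp' : ∀ z ∈ pathVerts p, z ∈ S := fun z hz => hp z (List.mem_append_left _ hz)
    refine (reflTransGen_arrowIn_of_path p hp').tail ⟨hp' w ?_, hp y ?_, ⟨e⟩⟩
    · rw [pathVerts_eq_vertices]; exact p.end_mem_vertices
    · exact List.mem_append_right _ (List.mem_singleton_self y)

theorem finite_arrowIn_succ (hout : ∀ x : V, Finite (Σ y : V, x ⟶ y)) (S : Set V) (a : V) :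
    {b | ArrowIn S a b}.Finite :=
  (Set.finite_range (Sigma.fst : (Σ y : V, a ⟶ y) → V)).subset
    fun b ⟨_, _, ⟨e⟩⟩ => ⟨⟨b, e⟩, rfl⟩

theorem finite_arrowIn_pred (hin : ∀ y : V, Finite (Σ x : V, x ⟶ y)) (S : Set V) (b : V) :
    {a | ArrowIn S a b}.Finite :=
  (Set.finite_range (Sigma.fst : (Σ x : V, x ⟶ b) → V)).subset
    fun a ⟨_, _, ⟨e⟩⟩ => ⟨⟨a, e⟩, rfl⟩

end Quiver

open Quiver

theorem SetTopFinite.hasRightInfPathIn {Q : Type} [Quiver.{0} Q]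
    (hout : ∀ x : Q, Finite (Σ y : Q, x ⟶ y)) {S : Set Q} (hS : S.Infinite)
    (htop : SetTopFinite Q S) : HasRightInfPathIn Q S := by
  obtain ⟨T, hT⟩ := htop
  obtain ⟨f, hf⟩ := exists_seq_rel_of_infinite_reachable (finite_arrowIn_succ hout S)
    T.finite_toSet
    (hS.mono fun x hx => by
      obtain ⟨t, ht, p, hp⟩ := hT x hx
      exact ⟨t, ht, reflTransGen_arrowIn_of_path p hp⟩)
  exact ⟨f, fun n => (hf n).2.2.some, fun n => (hf n).1⟩

theorem SetSocleFinite.hasLeftInfPathIn {Q : Type} [Quiver.{0} Q]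
    (hin : ∀ y : Q, Finite (Σ x : Q, x ⟶ y)) {S : Set Q} (hS : S.Infinite)
    (hsoc : SetSocleFinite Q S) : HasLeftInfPathIn Q S := by
  obtain ⟨T, hT⟩ := hsoc
  obtain ⟨f, hf⟩ := exists_seq_rel_of_infinite_reachable (R := Function.swap (ArrowIn S))
    (finite_arrowIn_pred hin S) T.finite_toSet
    (hS.mono fun x hx => by
      obtain ⟨t, ht, p, hp⟩ := hT x hx
      exact ⟨t, ht, reflTransGen_swap.mpr (reflTransGen_arrowIn_of_path p hp)⟩)
  exact ⟨f, fun n => (hf n).2.2.some, fun n => (hf n).2.1⟩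

section ModuleFunctor

variable {k : Type} [Field k] {J : Type*} [Category J] {ι : Type} [Fintype ι]
  {F : ι → J ⥤ ModuleCat.{0} k} [HasBiproduct F] {M : J ⥤ ModuleCat.{0} k}

theorem exists_app_ι_comp_ne_zero_of_epi (g : ⨁ F ⟶ M) [Epi g] {x : J} {m : M.obj x}
    (hm : m ≠ 0) : ∃ (i : ι) (w : (F i).obj x), (biproduct.ι F i ≫ g).app x w ≠ 0 := by
  have : Epi (g.app x) := (NatTrans.epi_iff_epi_app g).1 inferInstance x
  obtain ⟨u, rfl⟩ := (ModuleCat.epi_iff_surjective _).1 this m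
  by_contra! h
  apply hm
  have hg : g = ∑ i, (biproduct.π F i ≫ biproduct.ι F i) ≫ g := by
    rw [← Preadditive.sum_comp, biproduct.total, Category.id_comp]
  rw [hg, NatTrans.app_sum]
  change ModuleCat.Hom.hom _ _ = 0
  rw [ModuleCat.hom_sum, LinearMap.sum_apply]
  exact Finset.sum_eq_zero fun i _ => h i _

theorem exists_app_comp_π_ne_zero_of_mono (f : M ⟶ ⨁ F) [Mono f] {x : J} {m : M.obj x}
    (hm : m ≠ 0) : ∃ i : ι, (f ≫ biproduct.π F i).app x m ≠ 0 := by
  have : Mono (f.app x) := (NatTrans.mono_iff_mono_app f).1 inferInstance x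
  have hinj := (ModuleCat.mono_iff_injective _).1 this
  by_contra! h
  apply hm
  apply hinj
  have hf : f = ∑ i, (f ≫ biproduct.π F i) ≫ biproduct.ι F i := by
    simp only [Category.assoc]; rw [← Preadditive.comp_sum, biproduct.total, Category.comp_id]
  rw [map_zero, hf, NatTrans.app_sum]
  change ModuleCat.Hom.hom _ _ = 0
  rw [ModuleCat.hom_sum, LinearMap.sum_apply]
  refine Finset.sum_eq_zero fun i _ => ?_
  rw [NatTrans.comp_app, ModuleCat.comp_apply, h i, map_zero]

end ModuleFunctor

section PathRepresentations

variable {k : Type} [Field k] {Q : Type} [Quiver.{0} Q]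

theorem projRep_map_hom (a : Q) {x y : Q} (p : Quiver.Path x y) :
    ((projRep k Q a).map (pth p)).hom = Finsupp.lmapDomain k k (·.comp p) := by
  induction p with
  | nil =>
    erw [CategoryTheory.Functor.map_id]
    ext q
    exact Finsupp.mapDomain_id.symm
  | cons p e ih =>
    erw [Paths.lift_cons, ModuleCat.hom_comp, ih]
    show (Finsupp.lmapDomain k k _).comp (Finsupp.lmapDomain k k _) = _
    rw [← Finsupp.lmapDomain_comp]
    rfl

theorem injRep_map_hom (a : Q) {x y : Q} (p : Quiver.Path x y) :
    ((injRep k Q a).map (pth p)).hom = LinearMap.funLeft k k (p.comp ·) := by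
  induction p with
  | nil =>
    erw [CategoryTheory.Functor.map_id]
    ext g
    funext σ
    show g σ = g (Quiver.Path.nil.comp σ)
    rw [Quiver.Path.nil_comp]
  | cons p e ih =>
    erw [Paths.lift_cons, ModuleCat.hom_comp, ih]
    ext g
    funext σ
    show g (p.comp ((Quiver.Hom.toPath e).comp σ)) = g ((p.cons e).comp σ)
    rw [← Quiver.Path.comp_assoc, Quiver.Path.comp_toPath_eq_cons]

end PathRepresentations

section TensorCoordinates

variable {k : Type} [Field k]

theorem exists_single_tmul_ne_zero {ι V W : Type} [AddCommGroup V] [Module k V]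
    [AddCommGroup W] [Module k W] {T : (ι →₀ k) ⊗[k] V →ₗ[k] W} (hT : T ≠ 0) :
    ∃ (p : ι) (v : V), T (Finsupp.single p 1 ⊗ₜ v) ≠ 0 := by
  contrapose! hT
  ext p v
  exact hT p v

variable (k) in
noncomputable def funTensorCoord (ι V : Type) [AddCommGroup V] [Module k V] :
    (ι → k) ⊗[k] V →ₗ[k] (ι → V) :=
  piScalarRightHom k k V ι ∘ₗ (TensorProduct.comm k (ι → k) V).toLinearMap

variable {ι ι' V : Type} [AddCommGroup V] [Module k V]

@[simp]
theorem funTensorCoord_tmul (g : ι → k) (v : V) :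
    funTensorCoord k ι V (g ⊗ₜ v) = fun i => g i • v := by
  simp [funTensorCoord]

theorem funTensorCoord_injective [Finite ι] : Function.Injective (funTensorCoord k ι V) := by
  classical
  have := Fintype.ofFinite ι
  exact (piScalarRight k k V ι).injective.comp (TensorProduct.comm k (ι → k) V).injective

theorem funTensorCoord_rTensor_funLeft (f : ι' → ι) (w : (ι → k) ⊗[k] V) :
    funTensorCoord k ι' V ((LinearMap.funLeft k k f).rTensor V w) =
      funTensorCoord k ι V w ∘ f := by
  induction w using TensorProduct.induction_on with
  | zero => simp
  | tmul g v => simp [LinearMap.funLeft]; rfl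
  | add w₁ w₂ h₁ h₂ => simp only [map_add, h₁, h₂]; rfl

end TensorCoordinates

section Support

variable {k : Type} [Field k] {Q : Type} [Quiver.{0} Q]

theorem pathVerts_subset_suppR_of_map_ne_zero (M : RepQ k Q) {x y : Q} (p : Quiver.Path x y)
    {m : M.obj (vtx x)} (hm : M.map (pth p) m ≠ 0) : ∀ z ∈ pathVerts p, z ∈ suppR k Q M := by
  intro z hz
  obtain ⟨r, s, rfl⟩ := p.exists_eq_comp_of_mem_vertices (pathVerts_eq_vertices p ▸ hz)
  refine nontrivial_of_ne (M.map (pth r) m) 0 fun h0 => hm ?_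
  rw [show pth (r.comp s) = pth r ≫ pth s from rfl, M.map_comp, ModuleCat.comp_apply, h0,
    map_zero]

theorem tensorRep_map_hom (F : RepQ k Q) (V : ModuleCat.{0} k) {x y : Q} (p : Quiver.Path x y) :
    ((tensorRep k F V).map (pth p)).hom = (F.map (pth p)).hom.rTensor V :=
  rfl

theorem hom_app_naturality_apply {F G : RepQ k Q} (h : F ⟶ G) {x y : Q} (p : Quiver.Path x y)
    (w : F.obj (vtx x)) :
    (h.app (vtx y)).hom ((F.map (pth p)).hom w) = (G.map (pth p)).hom ((h.app (vtx x)).hom w) :=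
  LinearMap.congr_fun (congrArg ModuleCat.Hom.hom (h.naturality (pth p))) w

/-- `P_a ⊗ V` is generated by the elements `nil ⊗ v` at the vertex `a`. -/
theorem exists_map_path_ne_zero_of_projTensor {a x : Q} {V : ModuleCat.{0} k} {M : RepQ k Q}
    (h : tensorRep k (projRep k Q a) V ⟶ M) {w : (tensorRep k (projRep k Q a) V).obj (vtx x)}
    (hw : (h.app (vtx x)).hom w ≠ 0) :
    ∃ (q : Quiver.Path a x) (v : V), (M.map (pth q)).hom ((h.app (vtx a)).hom
        ((Finsupp.single .nil 1 : (projRep k Q a).obj (vtx a)) ⊗ₜ[k] v)) ≠ 0 := by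
  obtain ⟨q, v, hqv⟩ := exists_single_tmul_ne_zero (T := (h.app (vtx x)).hom)
    fun h0 => hw (LinearMap.congr_fun h0 w)
  refine ⟨q, v, ?_⟩
  erw [← hom_app_naturality_apply, tensorRep_map_hom, LinearMap.rTensor_tmul, projRep_map_hom,
    Finsupp.lmapDomain_apply, Finsupp.mapDomain_single, Quiver.Path.nil_comp]
  exact hqv

theorem exists_path_subset_suppR_of_injTensor {a x : Q} [Finite (Quiver.Path x a)]
    {V : ModuleCat.{0} k} {M : RepQ k Q} (h : M ⟶ tensorRep k (injRep k Q a) V)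
    {m : M.obj (vtx x)} (hm : (h.app (vtx x)).hom m ≠ 0) :
    ∃ p : Quiver.Path x a, ∀ z ∈ pathVerts p, z ∈ suppR k Q M := by
  obtain ⟨p, hp⟩ : ∃ p : Quiver.Path x a,
      funTensorCoord k (Quiver.Path x a) V ((h.app (vtx x)).hom m) p ≠ 0 := by
    by_contra! h0
    exact hm (funTensorCoord_injective ((funext h0).trans (map_zero _).symm))
  refine ⟨p, fun z hz => ?_⟩
  obtain ⟨r, s, rfl⟩ := p.exists_eq_comp_of_mem_vertices (pathVerts_eq_vertices p ▸ hz)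
  have hcoord :
      funTensorCoord k (Quiver.Path z a) V ((h.app (vtx z)).hom ((M.map (pth r)).hom m)) s =
      funTensorCoord k (Quiver.Path x a) V ((h.app (vtx x)).hom m) (r.comp s) := by
    erw [hom_app_naturality_apply, tensorRep_map_hom, injRep_map_hom,
      funTensorCoord_rTensor_funLeft]
    rfl
  refine nontrivial_of_ne ((M.map (pth r)).hom m) 0 fun h0 => hp ?_
  rw [← hcoord, h0]
  erw [map_zero, map_zero]
  rfl

end Support

section Finiteness

variable {k : Type} [Field k] {Q : Type} [Quiver.{0} Q]

theorem setTopFinite_suppR_of_epi {P M : RepQ k Q} (hP : MemProj k Q P) (g : P ⟶ M) [Epi g] :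
    SetTopFinite Q (suppR k Q M) := by
  classical
  obtain ⟨n, a, V, ⟨e⟩⟩ := hP
  refine ⟨Finset.univ.image a, fun x (hx : Nontrivial _) => ?_⟩
  obtain ⟨m, hm⟩ := exists_ne (0 : M.obj (vtx x))
  obtain ⟨i, w, hw⟩ := exists_app_ι_comp_ne_zero_of_epi (e.inv ≫ g) hm
  obtain ⟨q, v, hq⟩ := exists_map_path_ne_zero_of_projTensor _ hw
  exact ⟨a i, Finset.mem_image_of_mem a (Finset.mem_univ i), q,
    pathVerts_subset_suppR_of_map_ne_zero M q hq⟩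

theorem setSocleFinite_suppR_of_mono (hfin : ∀ x y : Q, Finite (Quiver.Path x y))
    {M I : RepQ k Q} (hI : MemInj k Q I) (f : M ⟶ I) [Mono f] :
    SetSocleFinite Q (suppR k Q M) := by
  classical
  obtain ⟨n, a, V, ⟨e⟩⟩ := hI
  refine ⟨Finset.univ.image a, fun x (hx : Nontrivial _) => ?_⟩
  obtain ⟨m, hm⟩ := exists_ne (0 : M.obj (vtx x))
  obtain ⟨i, hi⟩ := exists_app_comp_π_ne_zero_of_mono (f ≫ e.hom) hm
  have := hfin x (a i)
  obtain ⟨p, hp⟩ := exists_path_subset_suppR_of_injTensor _ hi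
  exact ⟨a i, Finset.mem_image_of_mem a (Finset.mem_univ i), p, hp⟩

end Finiteness

/-- Let `k` be a field, `Q` a strongly locally finite quiver and `M` an
infinite dimensional representation in `rep(Q)` (locally finite dimensional but not finite
dimensional). Then: (1) if `M` is finitely presented, then `supp M` contains a right
infinite path; (2) if `M` is finitely co-presented, then `supp M` contains a left infinite
path. -/
theorem statement_3 (k : Type) [Field k] (Q : Type) [Quiver.{0} Q]
    (hQ : StronglyLocallyFinite Q) (M : RepQ k Q) (hlfd : LocFinDim k Q M)
    (hinf : ¬ FinDimRep k Q M) :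
    (FinPresented k Q M → HasRightInfPathIn Q (suppR k Q M)) ∧
    (FinCopresented k Q M → HasLeftInfPathIn Q (suppR k Q M)) := by
  obtain ⟨hout, hin, hfin⟩ := hQ
  have hS : (suppR k Q M).Infinite := fun h => hinf ⟨h, hlfd⟩
  refine ⟨fun ⟨_, _, _, g, _, _, ⟨hP₀, _⟩, hse⟩ => ?_,
    fun ⟨_, _, f, _, _, ⟨hI₀, _⟩, _, hse⟩ => ?_⟩
  · have : Epi g := hse.epi_g
    exact (setTopFinite_suppR_of_epi hP₀ g).hasRightInfPathIn hout hS
  · have : Mono f := hse.mono_f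
    exact (setSocleFinite_suppR_of_mono hfin hI₀ f).hasLeftInfPathIn hin hS
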